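/- Let N ≥ 1 and let ψ_j, φ_j : ℝ² → ℝ^N (j ∈ ℤ) be smooth functions of (x, z) such that ⟨ψ_{j-1},φ_j⟩ ≠ 1 everywhere for every j, and such that for every j the lattice equations hold: ∂_x ψ_j = ψ_{j+1} + ⟨ψ_j,φ_j⟩ψ_j, −∂_x φ_j = φ_{j-1} + ⟨ψ_j,φ_j⟩φ_j, ∂_z ψ_j = ψ_{j-1}/(⟨ψ_{j-1},φ_j⟩ − 1), −∂_z φ_j = φ_{j+1}/(⟨ψ_j,φ_{j+1}⟩ − 1). Then the scalar functions u_j := ⟨ψ_j,φ_j⟩ and v_j := ⟨∂_z ψ_j, φ_j⟩ − 1 satisfy the two-dimensional Toda lattice: ∂_z u_j = v_j − v_{j+1} and ∂_x v_j = v_j(u_j − u_{j-1}) for every j. -/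

import Mathlib

noncomputable def pdx {V : Type*} [NormedAddCommGroup V] [NormedSpace ℝ V]
    (f : ℝ → ℝ → V) : ℝ → ℝ → V :=
  fun x y => deriv (fun s => f s y) x

noncomputable def pdz {V : Type*} [NormedAddCommGroup V] [NormedSpace ℝ V]
    (f : ℝ → ℝ → V) : ℝ → ℝ → V :=
  fun x y => deriv (fun s => f x s) y

def dot {N : ℕ} (a b : Fin N → ℝ) : ℝ := ∑ i, a i * b i

lemma dot_add_left {N : ℕ} (a b c : Fin N → ℝ) : dot (a + b) c = dot a c + dot b c := by
  simp [dot, add_mul, Finset.sum_add_distrib]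

lemma dot_smul_left {N : ℕ} (r : ℝ) (a c : Fin N → ℝ) : dot (r • a) c = r * dot a c := by
  simp [dot, Finset.mul_sum, mul_assoc]

lemma dot_neg_left {N : ℕ} (a c : Fin N → ℝ) : dot (-a) c = -dot a c := by
  simp [dot]

lemma dot_smul_right {N : ℕ} (r : ℝ) (a c : Fin N → ℝ) : dot a (r • c) = r * dot a c := by
  simp only [dot, Pi.smul_apply, smul_eq_mul, Finset.mul_sum]; exact Finset.sum_congr rfl fun i _ => by ring

lemma dot_neg_right {N : ℕ} (a c : Fin N → ℝ) : dot a (-c) = -dot a c := by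
  simp [dot]

lemma dot_add_right {N : ℕ} (a b c : Fin N → ℝ) : dot a (b + c) = dot a b + dot a c := by
  simp [dot, mul_add, Finset.sum_add_distrib]

lemma hasDerivAt_pdx {N : ℕ} (f : ℝ → ℝ → Fin N → ℝ)
    (hf : ContDiff ℝ (⊤ : ℕ∞) (fun p : ℝ × ℝ => f p.1 p.2)) (x z : ℝ) :
    HasDerivAt (fun s => f s z) (pdx f x z) x := by
  have h1 : DifferentiableAt ℝ (fun s : ℝ => (s, z)) x :=
    differentiableAt_id.prodMk (differentiableAt_const z)
  have h2 : DifferentiableAt ℝ (fun p : ℝ × ℝ => f p.1 p.2) (x, z) :=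
    (hf.differentiable (by simp)) _
  have h : DifferentiableAt ℝ (fun s => f s z) x := h2.comp (g := fun p : ℝ × ℝ => f p.1 p.2) x h1
  simpa [pdx] using h.hasDerivAt

lemma hasDerivAt_pdz {N : ℕ} (f : ℝ → ℝ → Fin N → ℝ)
    (hf : ContDiff ℝ (⊤ : ℕ∞) (fun p : ℝ × ℝ => f p.1 p.2)) (x z : ℝ) :
    HasDerivAt (fun s => f x s) (pdz f x z) z := by
  have h1 : DifferentiableAt ℝ (fun s : ℝ => (x, s)) z :=
    (differentiableAt_const x).prodMk differentiableAt_id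
  have h2 : DifferentiableAt ℝ (fun p : ℝ × ℝ => f p.1 p.2) (x, z) :=
    (hf.differentiable (by simp)) _
  have h : DifferentiableAt ℝ (fun s => f x s) z := h2.comp z h1
  simpa [pdz] using h.hasDerivAt

lemma hasDerivAt_dot {N : ℕ} {a b : ℝ → Fin N → ℝ} {a' b' : Fin N → ℝ} {x : ℝ}
    (ha : HasDerivAt a a' x) (hb : HasDerivAt b b' x) :
    HasDerivAt (fun s => dot (a s) (b s)) (dot a' (b x) + dot (a x) b') x := by
  have h : ∀ i : Fin N, HasDerivAt (fun s => a s i * b s i)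
      (a' i * b x i + a x i * b' i) x := fun i =>
    (hasDerivAt_pi.mp ha i).mul (hasDerivAt_pi.mp hb i)
  simpa [dot, Finset.sum_add_distrib] using HasDerivAt.fun_sum (fun i _ => h i)

theorem lattice_pair_gives_Toda (N : ℕ) (hN : 1 ≤ N)
    (ψ φ : ℤ → ℝ → ℝ → (Fin N → ℝ))
    (hψ : ∀ j, ContDiff ℝ (⊤ : ℕ∞) (fun p : ℝ × ℝ => ψ j p.1 p.2))
    (hφ : ∀ j, ContDiff ℝ (⊤ : ℕ∞) (fun p : ℝ × ℝ => φ j p.1 p.2))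
    (hne : ∀ j x z, dot (ψ (j - 1) x z) (φ j x z) ≠ 1)
    (hLat₁ : ∀ j x z, pdx (ψ j) x z =
      ψ (j + 1) x z + dot (ψ j x z) (φ j x z) • ψ j x z)
    (hLat₂ : ∀ j x z, -pdx (φ j) x z =
      φ (j - 1) x z + dot (ψ j x z) (φ j x z) • φ j x z)
    (hLat₃ : ∀ j x z, pdz (ψ j) x z =
      (dot (ψ (j - 1) x z) (φ j x z) - 1)⁻¹ • ψ (j - 1) x z)
    (hLat₄ : ∀ j x z, -pdz (φ j) x z =
      (dot (ψ j x z) (φ (j + 1) x z) - 1)⁻¹ • φ (j + 1) x z)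
    (u v : ℤ → ℝ → ℝ → ℝ)
    (hu : ∀ j x z, u j x z = dot (ψ j x z) (φ j x z))
    (hv : ∀ j x z, v j x z = dot (pdz (ψ j) x z) (φ j x z) - 1) :
    ∀ j x z,
      pdz (u j) x z = v j x z - v (j + 1) x z ∧
      pdx (v j) x z = v j x z * (u j x z - u (j - 1) x z) := by
  -- closed form for v
  have hsub : ∀ j x z, dot (ψ (j - 1) x z) (φ j x z) - 1 ≠ 0 := fun j x z =>
    sub_ne_zero.mpr (hne j x z)
  have hv' : ∀ j x z, v j x z = (dot (ψ (j - 1) x z) (φ j x z) - 1)⁻¹ := by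
    intro j x z
    rw [hv, hLat₃, dot_smul_left]
    have hd := hsub j x z
    field_simp
    ring
  intro j x z
  constructor
  · -- z-equation
    have hder : HasDerivAt (fun s => u j x s)
        (dot (pdz (ψ j) x z) (φ j x z) + dot (ψ j x z) (pdz (φ j) x z)) z := by
      have e : (fun s => u j x s) = fun s => dot (ψ j x s) (φ j x s) :=
        funext fun s => hu j x s
      rw [e]
      exact hasDerivAt_dot (hasDerivAt_pdz (ψ j) (hψ j) x z) (hasDerivAt_pdz (φ j) (hφ j) x z)
    have hpu : pdz (u j) x z =
        dot (pdz (ψ j) x z) (φ j x z) + dot (ψ j x z) (pdz (φ j) x z) := hder.deriv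
    have h1 : dot (pdz (ψ j) x z) (φ j x z) = v j x z + 1 := by rw [hv]; ring
    have hφz : pdz (φ j) x z =
        -((dot (ψ j x z) (φ (j + 1) x z) - 1)⁻¹ • φ (j + 1) x z) := by
      rw [← hLat₄ j x z]; ring
    have h2 : dot (ψ j x z) (pdz (φ j) x z) =
        -((dot (ψ j x z) (φ (j + 1) x z) - 1)⁻¹ * dot (ψ j x z) (φ (j + 1) x z)) := by
      rw [hφz, dot_neg_right, dot_smul_right]
    have hvj1 : v (j + 1) x z = (dot (ψ j x z) (φ (j + 1) x z) - 1)⁻¹ := by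
      have := hv' (j + 1) x z
      simpa using this
    have hd1 : dot (ψ j x z) (φ (j + 1) x z) - 1 ≠ 0 := by
      have := hsub (j + 1) x z
      simpa using this
    rw [hpu, h1, h2, hvj1]
    field_simp
    ring
  · -- x-equation
    set d := dot (ψ (j - 1) x z) (φ j x z) with hd_def
    have hD : HasDerivAt (fun s => dot (ψ (j - 1) s z) (φ j s z))
        (dot (pdx (ψ (j - 1)) x z) (φ j x z) + dot (ψ (j - 1) x z) (pdx (φ j) x z)) x :=
      hasDerivAt_dot (hasDerivAt_pdx (ψ (j - 1)) (hψ (j - 1)) x z)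
        (hasDerivAt_pdx (φ j) (hφ j) x z)
    have hinv : HasDerivAt (fun s => (dot (ψ (j - 1) s z) (φ j s z) - 1)⁻¹)
        (-(dot (pdx (ψ (j - 1)) x z) (φ j x z) + dot (ψ (j - 1) x z) (pdx (φ j) x z)) /
          (d - 1) ^ 2) x :=
      (hD.sub_const 1).inv (hsub j x z)
    have hpv : pdx (v j) x z =
        -(dot (pdx (ψ (j - 1)) x z) (φ j x z) + dot (ψ (j - 1) x z) (pdx (φ j) x z)) /
          (d - 1) ^ 2 := by
      have e : (fun s => v j s z) = fun s => (dot (ψ (j - 1) s z) (φ j s z) - 1)⁻¹ :=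
        funext fun s => hv' j s z
      show deriv (fun s => v j s z) x = _
      rw [e]
      exact hinv.deriv
    -- compute the two dot products
    have hψx : pdx (ψ (j - 1)) x z =
        ψ j x z + u (j - 1) x z • ψ (j - 1) x z := by
      have := hLat₁ (j - 1) x z
      rw [hu]
      simpa using this
    have hφx : pdx (φ j) x z =
        -(φ (j - 1) x z + u j x z • φ j x z) := by
      rw [hu, ← hLat₂ j x z]; ring
    have e1 : dot (pdx (ψ (j - 1)) x z) (φ j x z) = u j x z + u (j - 1) x z * d := by
      rw [hψx, dot_add_left, dot_smul_left, ← hu, ← hd_def]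
    have e2 : dot (ψ (j - 1) x z) (pdx (φ j) x z) = -(u (j - 1) x z + u j x z * d) := by
      rw [hφx, dot_neg_right, dot_add_right, dot_smul_right, ← hu, ← hd_def]
    rw [hpv, e1, e2, hv' j x z, ← hd_def]
    have hd := hsub j x z
    rw [← hd_def] at hd
    field_simp
    ring
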